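/- arXiv:1505.03898 — 3 statements merged into one kernel-verified Lean document; each statement's English description precedes it below -/
import Mathlib

section
/- Let τ ≥ −1, μ > 0, c ∈ ℝ, u_1, …, u_m ∈ ℝⁿ, y_1, …, y_m ∈ {−1, +1}. Define the Lagrangian L(x, e, z, β, ξ) = μ‖e‖₁ + (1/m)∑_{i=1}^m L_τ(z_i) + ⟨β, x − e⟩ + ∑_{i=1}^m ξ_i(c − y_i⟨u_i, x⟩ − z_i). If ‖β‖_∞ ≤ μ and −τ/m ≤ ξ_i ≤ 1/m for all i, then the infimum of L(x, e, z, β, ξ) over all e ∈ ℝⁿ, z ∈ ℝᵐ, and x ∈ ℝⁿ with ‖x‖₂ ≤ 1 equals c∑_{i=1}^m ξ_i − ‖∑_{i=1}^m ξ_i y_i u_i − β‖₂. -/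
open scoped RealInnerProductSpace

/-!
Write `w = ∑ ξ_i y_i u_i`. The Lagrangian splits as
`c ∑ ξ_i + ⟪β - w, x⟫ + (μ‖e‖₁ - ⟪β, e⟫) + ∑ ((1/m) L_τ(z_i) - ξ_i z_i)`.
The bound `‖β‖_∞ ≤ μ` makes the `e`-part nonnegative (Hölder), the bounds on `ξ_i` make every
`z`-term nonnegative, and on the unit ball `⟪β - w, x⟫ ≥ -‖w - β‖` (Cauchy–Schwarz). All three
bounds are attained simultaneously at `e = 0`, `z = 0`, `x = (w - β) / ‖w - β‖`.
-/

noncomputable section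

def pinballLoss (τ t : ℝ) : ℝ := if 0 ≤ t then t else -τ * t

theorem mul_le_mul_pinballLoss {τ k ξ : ℝ} (hlo : -τ * k ≤ ξ) (hhi : ξ ≤ k) (t : ℝ) :
    ξ * t ≤ k * pinballLoss τ t := by
  unfold pinballLoss
  split_ifs with ht
  · exact mul_le_mul_of_nonneg_right hhi ht
  · nlinarith

theorem inner_le_mul_sum_abs {ι : Type*} [Fintype ι] {β : EuclideanSpace ℝ ι} {μ : ℝ}
    (hβ : ∀ j, |β j| ≤ μ) (e : EuclideanSpace ℝ ι) : ⟪β, e⟫ ≤ μ * ∑ j, |e j| := by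
  rw [PiLp.inner_apply, Finset.mul_sum]
  refine Finset.sum_le_sum fun j _ => ?_
  calc ⟪β j, e j⟫ ≤ |β j| * |e j| := by
        rw [← abs_mul, mul_comm]; exact le_abs_self _
    _ ≤ μ * |e j| := mul_le_mul_of_nonneg_right (hβ j) (abs_nonneg _)

section InnerProductSpace

variable {E : Type*} [NormedAddCommGroup E] [InnerProductSpace ℝ E]

theorem neg_norm_le_inner_of_norm_le_one (v : E) {x : E} (hx : ‖x‖ ≤ 1) : -‖v‖ ≤ ⟪v, x⟫ := by
  have hvx : ‖v‖ * ‖x‖ ≤ ‖v‖ := mul_le_of_le_one_right (norm_nonneg v) hx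
  linarith [neg_abs_le ⟪v, x⟫, abs_real_inner_le_norm v x]

theorem exists_norm_le_one_inner_eq_neg_norm (v : E) : ∃ x : E, ‖x‖ ≤ 1 ∧ ⟪v, x⟫ = -‖v‖ := by
  -- `‖v‖⁻¹ = 0` when `v = 0`, so the same witness works in that case
  refine ⟨-(‖v‖⁻¹ • v), ?_, ?_⟩
  · rw [norm_neg, norm_smul, norm_inv, norm_norm]
    exact inv_mul_le_one_of_le₀ le_rfl (norm_nonneg v)
  · rw [inner_neg_right, real_inner_smul_right, real_inner_self_eq_norm_sq]
    rcases eq_or_ne ‖v‖ 0 with hv | hv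
    · simp [hv]
    · field_simp

theorem sum_mul_sub_inner_sub {ι : Type*} [Fintype ι] (ξ y z : ι → ℝ) (u : ι → E) (c : ℝ)
    (x : E) :
    ∑ i, ξ i * (c - y i * ⟪u i, x⟫ - z i) =
      c * ∑ i, ξ i - ⟪∑ i, ξ i • (y i • u i), x⟫ - ∑ i, ξ i * z i := by
  simp only [sum_inner, real_inner_smul_left, Finset.mul_sum, ← Finset.sum_sub_distrib]
  exact Finset.sum_congr rfl fun i _ => by ring

end InnerProductSpace

end

theorem lagrangian_inf_general {n m : ℕ} (τ μ c : ℝ)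
    (u : Fin m → EuclideanSpace ℝ (Fin n)) (y : Fin m → ℝ)
    (L : ℝ → ℝ) (hL : L = fun t => if 0 ≤ t then t else -τ * t)
    (β : EuclideanSpace ℝ (Fin n)) (ξ : Fin m → ℝ)
    (hβ : ∀ j, |β j| ≤ μ) (hξ : ∀ i, -τ / (m : ℝ) ≤ ξ i ∧ ξ i ≤ 1 / (m : ℝ)) :
    IsGLB { v : ℝ | ∃ x e : EuclideanSpace ℝ (Fin n), ∃ z : Fin m → ℝ, ‖x‖ ≤ 1 ∧
        v = μ * (∑ j : Fin n, |e j|) + (1 / (m : ℝ)) * (∑ i : Fin m, L (z i)) +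
            ⟪β, x - e⟫ + ∑ i : Fin m, ξ i * (c - y i * ⟪u i, x⟫ - z i) }
      (c * (∑ i : Fin m, ξ i) - ‖(∑ i : Fin m, ξ i • (y i • u i)) - β‖) := by
  obtain rfl : L = pinballLoss τ := hL
  set w := ∑ i : Fin m, ξ i • (y i • u i)
  refine IsLeast.isGLB ⟨?_, ?_⟩
  · obtain ⟨x, hx, hβwx⟩ := exists_norm_le_one_inner_eq_neg_norm (β - w)
    refine ⟨x, 0, 0, hx, ?_⟩
    rw [inner_sub_left] at hβwx
    rw [sum_mul_sub_inner_sub, norm_sub_rev]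
    simp only [PiLp.zero_apply, abs_zero, Finset.sum_const_zero, mul_zero, pinballLoss,
      Pi.zero_apply, le_refl, ↓reduceIte, add_zero, sub_zero, zero_add]
    linarith
  · rintro v ⟨x, e, z, hx, rfl⟩
    have hβwx := neg_norm_le_inner_of_norm_le_one (β - w) hx
    have he := inner_le_mul_sum_abs hβ e
    have hz : ∑ i, ξ i * z i ≤ 1 / (m : ℝ) * ∑ i, pinballLoss τ (z i) := by
      rw [Finset.mul_sum]
      refine Finset.sum_le_sum fun i _ => mul_le_mul_pinballLoss ?_ (hξ i).2 (z i)
      simpa only [mul_one_div] using (hξ i).1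
    rw [inner_sub_left] at hβwx
    rw [sum_mul_sub_inner_sub, inner_sub_right, norm_sub_rev]
    linarith

/-- The infimum of the Lagrangian of the ep-SVM problem over `e ∈ ℝⁿ`, `z ∈ ℝᵐ` and
`x` in the unit ball equals the dual objective `c ∑ ξ_i - ‖∑ ξ_i y_i u_i - β‖₂`,
whenever `‖β‖_∞ ≤ μ` and `-τ/m ≤ ξ_i ≤ 1/m`. -/
theorem lagrangian_inf {n m : ℕ} (hm : 0 < m) (τ μ c : ℝ) (hτ : -1 ≤ τ) (hμ : 0 < μ)
    (u : Fin m → EuclideanSpace ℝ (Fin n)) (y : Fin m → ℝ)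
    (hy : ∀ i, y i = 1 ∨ y i = -1)
    (L : ℝ → ℝ) (hL : L = fun t => if 0 ≤ t then t else -τ * t)
    (β : EuclideanSpace ℝ (Fin n)) (ξ : Fin m → ℝ)
    (hβ : ∀ j, |β j| ≤ μ) (hξ : ∀ i, -τ / (m : ℝ) ≤ ξ i ∧ ξ i ≤ 1 / (m : ℝ)) :
    IsGLB { v : ℝ | ∃ x e : EuclideanSpace ℝ (Fin n), ∃ z : Fin m → ℝ, ‖x‖ ≤ 1 ∧
        v = μ * (∑ j : Fin n, |e j|) + (1 / (m : ℝ)) * (∑ i : Fin m, L (z i)) +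
            ⟪β, x - e⟫ + ∑ i : Fin m, ξ i * (c - y i * ⟪u i, x⟫ - z i) }
      (c * (∑ i : Fin m, ξ i) - ‖(∑ i : Fin m, ξ i • (y i • u i)) - β‖) :=
  lagrangian_inf_general τ μ c u y L hL β ξ hβ hξ
end

section
/- (ξ-subproblem closed-form maximizer, eq. (13).) Let a, w ∈ ℝⁿ and c ∈ ℝ with 0 ≤ c < ‖a‖₂. Define A = ‖a‖₂²(‖a‖₂² − c²), B = 2(‖a‖₂² − c²)⟨a, w⟩, C = ⟨a, w⟩² − c²‖w‖₂², and d̄ = (−B + √(B² − 4AC))/(2A). Then the concave function f(d) = c·d − ‖w + d·a‖₂ attains its global maximum over ℝ at d̄: f(d̄) ≥ f(d) for all d ∈ ℝ. Consequently, for any l ≤ r, the maximum of f over [l, r] is attained at max{l, min{r, d̄}}. -/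
open scoped RealInnerProductSpace

/-!
`f d = c * d - ‖w + d • a‖` is concave, and a point `t` with `⟪a, w + t • a⟫ = c * ‖w + t • a‖`
maximises it: by Cauchy–Schwarz against `u = w + t • a`, the slope `c` supports `d ↦ ‖w + d • a‖`
at `t` (when `u = 0` this uses `c ≤ ‖a‖` instead). Squaring that first-order condition gives
exactly `A d² + B d + C = 0`, whose discriminant is nonnegative by Cauchy–Schwarz again, and the
sign condition `⟪a, w + d • a⟫ ≥ 0` is `2 A d + B ≥ 0`, which singles out the root with `+√`.
On `[l, r]` the clamped point lies between `d` and `d̄`, so concavity gives the second claim.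
-/

open Set

section Quadratic

variable {A B C x : ℝ}

theorem quadratic_eq_zero_of_eq_root (hA : A ≠ 0) (hD : 0 ≤ discrim A B C)
    (hx : x = (-B + √(discrim A B C)) / (2 * A)) : A * (x * x) + B * x + C = 0 :=
  (quadratic_eq_zero_iff hA (Real.mul_self_sqrt hD).symm x).mpr (Or.inl hx)

theorem two_mul_mul_add_eq_sqrt_discrim_of_eq_root (hA : A ≠ 0)
    (hx : x = (-B + √(discrim A B C)) / (2 * A)) : 2 * A * x + B = √(discrim A B C) := by
  rw [hx]
  field_simp
  ring

end Quadratic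

theorem max_min_mem_uIcc {α : Type*} [LinearOrder α] {l r d m : α} (hd : d ∈ Icc l r) :
    max l (min r m) ∈ uIcc d m := by
  rcases hd with ⟨hld, hdr⟩
  rcases le_total m l with hml | hlm
  · rw [min_eq_right (hml.trans (hld.trans hdr)), max_eq_left hml]
    exact Icc_subset_uIcc' ⟨hml, hld⟩
  rcases le_total r m with hrm | hmr
  · rw [min_eq_left hrm, max_eq_right (hld.trans hdr)]
    exact Icc_subset_uIcc ⟨hdr, hrm⟩
  · rw [min_eq_right hmr, max_eq_right hlm]
    exact right_mem_uIcc

section ConcaveOn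

variable {𝕜 β : Type*} [Field 𝕜] [LinearOrder 𝕜] [IsStrictOrderedRing 𝕜]
  [AddCommGroup β] [LinearOrder β] [IsOrderedAddMonoid β] [Module 𝕜 β]
  [IsStrictOrderedModule 𝕜 β]

theorem ConcaveOn.le_apply_max_min {f : 𝕜 → β} (hf : ConcaveOn 𝕜 univ f) {m : 𝕜}
    (hm : ∀ x, f x ≤ f m) {l r d : 𝕜} (hd : d ∈ Icc l r) : f d ≤ f (max l (min r m)) := by
  have hmin := hf.min_le_of_mem_segment (mem_univ d) (mem_univ m)
    (by rw [segment_eq_uIcc]; exact max_min_mem_uIcc hd)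
  rwa [min_eq_left (hm d)] at hmin

end ConcaveOn

section InnerProductSpace

variable {E : Type*} [NormedAddCommGroup E] [InnerProductSpace ℝ E]

theorem concaveOn_mul_sub_norm_add_smul (c : ℝ) (w a : E) :
    ConcaveOn ℝ univ fun d : ℝ => c * d - ‖w + d • a‖ := by
  have hnorm : ConvexOn ℝ univ fun d : ℝ => ‖w + d • a‖ := by
    have := convexOn_univ_norm.comp_affineMap (AffineMap.lineMap (k := ℝ) w (w + a))
    simpa [Function.comp_def, AffineMap.lineMap_apply_module', add_comm] using this
  exact ((LinearMap.mul ℝ ℝ c).concaveOn convex_univ).sub hnorm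

theorem mul_sub_norm_add_smul_le_of_inner_eq {a w : E} {c t : ℝ} (hca : |c| ≤ ‖a‖)
    (ht : ⟪a, w + t • a⟫ = c * ‖w + t • a‖) (d : ℝ) :
    c * d - ‖w + d • a‖ ≤ c * t - ‖w + t • a‖ := by
  set u := w + t • a
  have hd : w + d • a = u + (d - t) • a := by simp only [u, sub_smul]; abel
  suffices ‖u‖ + c * (d - t) ≤ ‖u + (d - t) • a‖ by rw [hd]; linarith
  rcases eq_or_ne u 0 with hu | hu
  · calc ‖u‖ + c * (d - t) ≤ |c| * |d - t| := by
          rw [hu, norm_zero, zero_add, ← abs_mul]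
          exact le_abs_self _
      _ ≤ ‖a‖ * |d - t| := by gcongr
      _ = ‖u + (d - t) • a‖ := by rw [hu, zero_add, norm_smul, Real.norm_eq_abs, mul_comm]
  · have hu : 0 < ‖u‖ := norm_pos_iff.mpr hu
    refine le_of_mul_le_mul_left ?_ hu
    calc ‖u‖ * (‖u‖ + c * (d - t)) = ⟪u, u + (d - t) • a⟫ := by
          rw [inner_add_right, real_inner_self_eq_norm_sq, real_inner_smul_right,
            real_inner_comm, ht]
          ring
      _ ≤ ‖u‖ * ‖u + (d - t) • a‖ := real_inner_le_norm _ _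

theorem quadratic_eq_inner_sq_sub_sq_mul_norm_sq (a w : E) (c d : ℝ) :
    ‖a‖ ^ 2 * (‖a‖ ^ 2 - c ^ 2) * (d * d) + 2 * (‖a‖ ^ 2 - c ^ 2) * ⟪a, w⟫ * d
        + (⟪a, w⟫ ^ 2 - c ^ 2 * ‖w‖ ^ 2) =
      ⟪a, w + d • a⟫ ^ 2 - c ^ 2 * ‖w + d • a‖ ^ 2 := by
  rw [inner_add_right, real_inner_smul_right, real_inner_self_eq_norm_sq, norm_add_sq_real,
    real_inner_smul_right, real_inner_comm, norm_smul, Real.norm_eq_abs, mul_pow, sq_abs]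
  ring

theorem discrim_nonneg_of_sq_le_norm_sq (a w : E) {c : ℝ} (hca : c ^ 2 ≤ ‖a‖ ^ 2) :
    0 ≤ discrim (‖a‖ ^ 2 * (‖a‖ ^ 2 - c ^ 2)) (2 * (‖a‖ ^ 2 - c ^ 2) * ⟪a, w⟫)
      (⟪a, w⟫ ^ 2 - c ^ 2 * ‖w‖ ^ 2) := by
  have hcs : ⟪a, w⟫ ^ 2 ≤ ‖a‖ ^ 2 * ‖w‖ ^ 2 := by
    rw [← mul_pow]; exact sq_le_sq' (neg_le_of_abs_le (abs_real_inner_le_norm a w))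
      (real_inner_le_norm a w)
  have hD : discrim (‖a‖ ^ 2 * (‖a‖ ^ 2 - c ^ 2)) (2 * (‖a‖ ^ 2 - c ^ 2) * ⟪a, w⟫)
      (⟪a, w⟫ ^ 2 - c ^ 2 * ‖w‖ ^ 2) =
      4 * (‖a‖ ^ 2 - c ^ 2) * c ^ 2 * (‖a‖ ^ 2 * ‖w‖ ^ 2 - ⟪a, w⟫ ^ 2) := by
    rw [discrim]; ring
  rw [hD]
  have := sub_nonneg.mpr hca
  have := sub_nonneg.mpr hcs
  positivity

theorem inner_add_smul_eq_mul_norm_of_eq_root {a w : E} {c A B C x : ℝ} (hc : 0 ≤ c)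
    (hca : c < ‖a‖) (hA : A = ‖a‖ ^ 2 * (‖a‖ ^ 2 - c ^ 2))
    (hB : B = 2 * (‖a‖ ^ 2 - c ^ 2) * ⟪a, w⟫) (hC : C = ⟪a, w⟫ ^ 2 - c ^ 2 * ‖w‖ ^ 2)
    (hx : x = (-B + √(B ^ 2 - 4 * A * C)) / (2 * A)) :
    ⟪a, w + x • a⟫ = c * ‖w + x • a‖ := by
  subst hA hB hC
  have hc2 : c ^ 2 < ‖a‖ ^ 2 := pow_lt_pow_left₀ hca hc two_ne_zero
  have hgap : 0 < ‖a‖ ^ 2 - c ^ 2 := sub_pos.mpr hc2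
  have hA : ‖a‖ ^ 2 * (‖a‖ ^ 2 - c ^ 2) ≠ 0 := by
    have := hc.trans_lt hca
    positivity
  have hroot := quadratic_eq_zero_of_eq_root hA (discrim_nonneg_of_sq_le_norm_sq a w hc2.le) hx
  rw [quadratic_eq_inner_sq_sub_sq_mul_norm_sq, sub_eq_zero, ← mul_pow] at hroot
  have hinner : 0 ≤ ⟪a, w + x • a⟫ := by
    refine nonneg_of_mul_nonneg_right ?_ (mul_pos two_pos hgap)
    calc 0 ≤ √(discrim _ _ _) := Real.sqrt_nonneg _
      _ = _ := by
        rw [← two_mul_mul_add_eq_sqrt_discrim_of_eq_root hA hx, inner_add_right,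
          real_inner_smul_right, real_inner_self_eq_norm_sq]
        ring
  exact (sq_eq_sq₀ hinner (by positivity)).mp hroot

end InnerProductSpace

/-- ξ-subproblem closed-form maximizer: for `0 ≤ c < ‖a‖`, the concave function
`f(d) = c d - ‖w + d a‖₂` attains its global maximum over `ℝ` at
`d̄ = (-B + √(B² - 4AC)) / (2A)`; consequently its maximum over `[l, r]` is attained at
`max{l, min{r, d̄}}`. -/
theorem xi_subproblem_closed_form {n : ℕ} (a w : EuclideanSpace ℝ (Fin n)) (c : ℝ)
    (hc : 0 ≤ c) (hca : c < ‖a‖)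
    (A B C dbar : ℝ)
    (hA : A = ‖a‖ ^ 2 * (‖a‖ ^ 2 - c ^ 2))
    (hB : B = 2 * (‖a‖ ^ 2 - c ^ 2) * ⟪a, w⟫)
    (hC : C = ⟪a, w⟫ ^ 2 - c ^ 2 * ‖w‖ ^ 2)
    (hdbar : dbar = (-B + Real.sqrt (B ^ 2 - 4 * A * C)) / (2 * A)) :
    (∀ d : ℝ, c * d - ‖w + d • a‖ ≤ c * dbar - ‖w + dbar • a‖) ∧
      ∀ l r : ℝ, l ≤ r → ∀ d ∈ Set.Icc l r,
        c * d - ‖w + d • a‖ ≤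
          c * max l (min r dbar) - ‖w + max l (min r dbar) • a‖ := by
  have hfoc := inner_add_smul_eq_mul_norm_of_eq_root hc hca hA hB hC hdbar
  have hmax := mul_sub_norm_add_smul_le_of_inner_eq ((abs_of_nonneg hc).trans_le hca.le) hfoc
  exact ⟨hmax, fun _ _ _ _ hd =>
    (concaveOn_mul_sub_norm_add_smul c w a).le_apply_max_min hmax hd⟩
end

section
/- (Closed-form solution of the passive model, the τ = −1 case of ep-SVM.) Let μ > 0 and v ∈ ℝⁿ, and define the soft-thresholding s ∈ ℝⁿ by s_j = sign(v_j)·max{|v_j| − μ, 0}. If s ≠ 0, then x* = s/‖s‖₂ is a global minimizer of μ‖x‖₁ − ⟨v, x⟩ over {x ∈ ℝⁿ : ‖x‖₂ ≤ 1}, and the minimum value is −‖s‖₂. If s = 0, then x = 0 is a global minimizer and the minimum value is 0. -/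
open scoped RealInnerProductSpace

/-!
Coordinatewise, `v_j x_j - μ |x_j| ≤ |s_j| |x_j|`, with equality at `x = s` where both sides are
`s_j ^ 2`. Summing and applying Cauchy–Schwarz bounds the objective below by `-‖s‖ ‖x‖ ≥ -‖s‖` on
the unit ball, while its value at `s` is `-‖s‖ ^ 2`; positive homogeneity of the objective turns
this into the value `-‖s‖` at `s / ‖s‖`.
-/

open Finset

noncomputable def softThreshold (μ t : ℝ) : ℝ := Real.sign t * max (|t| - μ) 0

theorem abs_softThreshold {μ : ℝ} (hμ : 0 ≤ μ) (t : ℝ) :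
    |softThreshold μ t| = max (|t| - μ) 0 := by
  rcases lt_trichotomy t 0 with h | rfl | h
  · simp [softThreshold, Real.sign_of_neg h]
  · simp [softThreshold, hμ]
  · simp [softThreshold, Real.sign_of_pos h]

theorem mul_softThreshold (μ t : ℝ) : t * softThreshold μ t = |t| * max (|t| - μ) 0 := by
  rcases lt_trichotomy t 0 with h | rfl | h
  · simp [softThreshold, Real.sign_of_neg h, abs_of_neg h]
  · simp [softThreshold]
  · simp [softThreshold, Real.sign_of_pos h, abs_of_pos h]

theorem mul_softThreshold_sub {μ : ℝ} (hμ : 0 ≤ μ) (t : ℝ) :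
    t * softThreshold μ t - μ * |softThreshold μ t| = softThreshold μ t ^ 2 := by
  rw [← sq_abs, mul_softThreshold, abs_softThreshold hμ]
  rcases le_total (|t| - μ) 0 with h | h
  · simp [max_eq_right h]
  · rw [max_eq_left h]; ring

theorem mul_sub_mul_abs_le_abs_softThreshold_mul {μ : ℝ} (hμ : 0 ≤ μ) (t x : ℝ) :
    t * x - μ * |x| ≤ |softThreshold μ t| * |x| := by
  have hvx : t * x ≤ |t| * |x| := (le_abs_self _).trans_eq (abs_mul t x)
  have hthr : |t| - μ ≤ |softThreshold μ t| :=
    (abs_softThreshold hμ t).symm ▸ le_max_left _ _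
  nlinarith [abs_nonneg x]

namespace EuclideanSpace

variable {ι : Type*} [Fintype ι]

theorem real_inner_eq_sum_mul (v x : EuclideanSpace ℝ ι) : ⟪v, x⟫ = ∑ j, v j * x j := by
  simp [PiLp.inner_apply, mul_comm]

theorem sum_abs_mul_abs_le_norm_mul_norm (s x : EuclideanSpace ℝ ι) :
    ∑ j, |s j| * |x j| ≤ ‖s‖ * ‖x‖ := by
  simpa only [norm_eq, Real.norm_eq_abs, sq_abs] using
    Real.sum_mul_le_sqrt_mul_sqrt univ (fun j => |s j|) (fun j => |x j|)

end EuclideanSpace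

section

variable {ι : Type*} [Fintype ι]

noncomputable def passiveObjective (μ : ℝ) (v x : EuclideanSpace ℝ ι) : ℝ :=
  μ * ∑ j, |x j| - ⟪v, x⟫

theorem passiveObjective_smul (μ : ℝ) (v x : EuclideanSpace ℝ ι) {c : ℝ} (hc : 0 ≤ c) :
    passiveObjective μ v (c • x) = c * passiveObjective μ v x := by
  simp only [passiveObjective, PiLp.smul_apply, smul_eq_mul, abs_mul, abs_of_nonneg hc,
    ← mul_sum, real_inner_smul_right]
  ring

variable {μ : ℝ} {v s : EuclideanSpace ℝ ι}

theorem passiveObjective_of_softThreshold (hμ : 0 ≤ μ)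
    (hs : ∀ j, s j = softThreshold μ (v j)) : passiveObjective μ v s = -‖s‖ ^ 2 := by
  rw [passiveObjective, EuclideanSpace.real_inner_eq_sum_mul, EuclideanSpace.real_norm_sq_eq,
    mul_sum, ← neg_sub, ← sum_sub_distrib]
  congr 1
  refine sum_congr rfl fun j _ => ?_
  rw [hs j, mul_softThreshold_sub hμ]

theorem neg_norm_mul_le_passiveObjective (hμ : 0 ≤ μ)
    (hs : ∀ j, s j = softThreshold μ (v j)) (x : EuclideanSpace ℝ ι) :
    -(‖s‖ * ‖x‖) ≤ passiveObjective μ v x := by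
  have hterm : ∀ j, v j * x j - μ * |x j| ≤ |s j| * |x j| := fun j =>
    hs j ▸ mul_sub_mul_abs_le_abs_softThreshold_mul hμ (v j) (x j)
  have hgap : ⟪v, x⟫ - μ * ∑ j, |x j| ≤ ‖s‖ * ‖x‖ := calc
    ⟪v, x⟫ - μ * ∑ j, |x j| = ∑ j, (v j * x j - μ * |x j|) := by
      rw [EuclideanSpace.real_inner_eq_sum_mul, mul_sum, sum_sub_distrib]
    _ ≤ ∑ j, |s j| * |x j| := sum_le_sum fun j _ => hterm j
    _ ≤ ‖s‖ * ‖x‖ := EuclideanSpace.sum_abs_mul_abs_le_norm_mul_norm s x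
  rw [passiveObjective]
  linarith

end

/-- Closed-form solution of the passive model: with soft-thresholding
`s_j = sign(v_j) max{|v_j| - μ, 0}`, if `s ≠ 0` then `x* = s/‖s‖₂` globally minimizes
`μ‖x‖₁ - ⟪v, x⟫` over the unit ball with minimum value `-‖s‖₂`; if `s = 0` then `x = 0`
is a global minimizer with minimum value `0`. -/
theorem passive_closed_form {n : ℕ} (μ : ℝ) (hμ : 0 < μ)
    (v s : EuclideanSpace ℝ (Fin n))
    (hs : ∀ j, s j = Real.sign (v j) * max (|v j| - μ) 0) :
    (s ≠ 0 →
        (∀ x : EuclideanSpace ℝ (Fin n), ‖x‖ ≤ 1 →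
            μ * (∑ j : Fin n, |(‖s‖⁻¹ • s : EuclideanSpace ℝ (Fin n)) j|) -
                ⟪v, ‖s‖⁻¹ • s⟫ ≤
              μ * (∑ j : Fin n, |x j|) - ⟪v, x⟫) ∧
          μ * (∑ j : Fin n, |(‖s‖⁻¹ • s : EuclideanSpace ℝ (Fin n)) j|) -
              ⟪v, ‖s‖⁻¹ • s⟫ = -‖s‖) ∧
      (s = 0 →
        ∀ x : EuclideanSpace ℝ (Fin n), ‖x‖ ≤ 1 →
          (0 : ℝ) ≤ μ * (∑ j : Fin n, |x j|) - ⟪v, x⟫) := by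
  change (s ≠ 0 →
      (∀ x, ‖x‖ ≤ 1 → passiveObjective μ v (‖s‖⁻¹ • s) ≤ passiveObjective μ v x) ∧
        passiveObjective μ v (‖s‖⁻¹ • s) = -‖s‖) ∧
    (s = 0 → ∀ x, ‖x‖ ≤ 1 → 0 ≤ passiveObjective μ v x)
  have hlow (x : EuclideanSpace ℝ (Fin n)) (hx : ‖x‖ ≤ 1) : -‖s‖ ≤ passiveObjective μ v x :=
    calc -‖s‖ ≤ -(‖s‖ * ‖x‖) := by nlinarith [norm_nonneg s]
      _ ≤ passiveObjective μ v x := neg_norm_mul_le_passiveObjective hμ.le hs x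
  refine ⟨fun hs0 => ?_, fun hs0 x hx => by simpa [hs0] using hlow x hx⟩
  have hval : passiveObjective μ v (‖s‖⁻¹ • s) = -‖s‖ := by
    rw [passiveObjective_smul μ v s (inv_nonneg.2 (norm_nonneg s)),
      passiveObjective_of_softThreshold hμ.le hs]
    field_simp [norm_ne_zero_iff.2 hs0]
  exact ⟨fun x hx => hval ▸ hlow x hx, hval⟩
end
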